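/- arXiv:2310.05839 — 2 statements merged into one kernel-verified Lean document; each statement's English description precedes it below -/
import Mathlib

section
/- In a finite set of Point Algebra constraints, every constraint of the form x ≠ y with x and y distinct variables can be disregarded when all other constraints are of the form u < v: the set of <-constraints together with ≠-constraints between distinct variables is satisfiable over ℚ if and only if the set of <-constraints alone is satisfiable. -/
/-!
Break the ties of a solution `α` of the `<`-constraints by an enumeration of the variables:
the lexicographic order on `(α v, index of v)` is a strict linear order extending `α u < α v`.
The rank of a variable in it (the number of variables strictly below) is then an injective
solution of the `<`-constraints, so it also satisfies every `≠`-constraint between distinct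
variables.
-/

open Finset

section Rank

variable {V L : Type*} [Fintype V]

def rankBy [Preorder L] [DecidableLT L] (f : V → L) (v : V) : ℕ :=
  #{w | f w < f v}

theorem rankBy_lt_rankBy [Preorder L] [DecidableLT L] {f : V → L} {u v : V} (h : f u < f v) :
    rankBy f u < rankBy f v := by
  refine card_lt_card ⟨fun w hw => ?_, fun hsub => ?_⟩
  · exact mem_filter.mpr ⟨mem_univ w, (mem_filter.mp hw).2.trans h⟩
  · exact lt_irrefl _ (mem_filter.mp (hsub (mem_filter.mpr ⟨mem_univ u, h⟩))).2

theorem rankBy_injective [LinearOrder L] {f : V → L} (hf : Function.Injective f) :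
    Function.Injective (rankBy f) := by
  intro u v huv
  by_contra hne
  rcases (hf.ne hne).lt_or_gt with h | h
  · exact (rankBy_lt_rankBy h).ne huv
  · exact (rankBy_lt_rankBy h).ne' huv

end Rank

theorem exists_injective_refinement {V L : Type*} [Fintype V] [LinearOrder L] (α : V → L) :
    ∃ β : V → ℚ, Function.Injective β ∧ ∀ u v, α u < α v → β u < β v := by
  let f : V → L ×ₗ Fin (Fintype.card V) := fun v => toLex (α v, Fintype.equivFin V v)
  have hf : Function.Injective f := fun u v huv =>
    (Fintype.equivFin V).injective (Prod.ext_iff.mp (toLex.injective huv)).2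
  refine ⟨fun v => rankBy f v, Nat.cast_injective.comp (rankBy_injective hf), fun u v h => ?_⟩
  exact Nat.cast_lt.mpr (rankBy_lt_rankBy (Prod.Lex.toLex_lt_toLex.mpr (Or.inl h)))

/-- In an instance consisting of `<`-constraints and `≠`-constraints between distinct
variables, the `≠`-constraints can be disregarded: the whole instance is satisfiable
over ℚ iff the `<`-constraints alone are satisfiable. -/
theorem neq_constraints_disregarded {V : Type} [Fintype V]
    (lts neqs : Finset (V × V)) (h : ∀ p ∈ neqs, p.1 ≠ p.2) :
    (∃ α : V → ℚ, (∀ p ∈ lts, α p.1 < α p.2) ∧ ∀ p ∈ neqs, α p.1 ≠ α p.2) ↔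
      (∃ α : V → ℚ, ∀ p ∈ lts, α p.1 < α p.2) := by
  refine ⟨fun ⟨α, hlts, _⟩ => ⟨α, hlts⟩, fun ⟨α, hlts⟩ => ?_⟩
  obtain ⟨β, hβ, hmono⟩ := exists_injective_refinement α
  exact ⟨β, fun p hp => hmono _ _ (hlts p hp), fun p hp => hβ.ne (h p hp)⟩
end

section
/- Let D be the digraph obtained by sequentially joining m ≥ 1 diamonds (identifying the east vertex of each diamond with the west vertex of the next). Then D is strongly connected, but for any diamond, deleting its n→s arc results in a digraph that is not strongly connected; specifically, the junction vertices on opposite sides of the picked diamond are no longer strongly connected. -/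
/-- Vertices of a sequence of `m` joined diamonds: `m+1` junction vertices
(`junction i` being the west vertex of diamond `i` and the east vertex of
diamond `i-1`), plus a north and a south vertex for each diamond. -/
inductive CV (m : ℕ)
  | junction : Fin (m + 1) → CV m
  | north : Fin m → CV m
  | south : Fin m → CV m

/-- Arcs of the joined diamonds: for each diamond `i`, arcs
`south i → junction i` (west), `junction i → north i`,
`south i → junction (i+1)` (east), `junction (i+1) → north i`, and
`north i → south i`. -/
def carc {m : ℕ} : CV m → CV m → Prop
  | .south i, .junction j => j = i.castSucc ∨ j = i.succ
  | .junction j, .north i => j = i.castSucc ∨ j = i.succ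
  | .north i, .south i' => i = i'
  | _, _ => False

/-- Arcs after picking diamond `d`, i.e. deleting its `north d → south d` arc. -/
def carcDel {m : ℕ} (d : Fin m) (a b : CV m) : Prop :=
  carc a b ∧ ¬(a = CV.north d ∧ b = CV.south d)

/-!
Consecutive junctions are joined both ways through their diamond (`w → n → s → e` and
`e → n → s → w`), so all junctions, and with them all vertices, are mutually reachable.
After picking diamond `d`, the vertices west of it (with `n_d`, but not `s_d`) are closed under
arcs: the arc `n_d → s_d` was their only way out. So `junction d.succ` is unreachable from
`junction d.castSucc`.
-/

open Relation

namespace CV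

variable {m : ℕ} (i : Fin m)

theorem carc_west_north : carc (junction i.castSucc) (north i) := .inl rfl

theorem carc_east_north : carc (junction i.succ) (north i) := .inr rfl

theorem carc_north_south : carc (north i) (south i) := rfl

theorem carc_south_west : carc (south i) (junction i.castSucc) := .inl rfl

theorem carc_south_east : carc (south i) (junction i.succ) := .inr rfl

theorem reflTransGen_carc_west_east : ReflTransGen carc (junction i.castSucc) (junction i.succ) :=
  .head (carc_west_north i) <| .head (carc_north_south i) <| .single (carc_south_east i)

theorem reflTransGen_carc_east_west : ReflTransGen carc (junction i.succ) (junction i.castSucc) :=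
  .head (carc_east_north i) <| .head (carc_north_south i) <| .single (carc_south_west i)

theorem reflTransGen_carc_junction_zero_junction (j : Fin (m + 1)) :
    ReflTransGen carc (junction 0) (junction j) :=
  Fin.induction .refl (fun i ih => ih.trans (reflTransGen_carc_west_east i)) j

theorem reflTransGen_carc_junction_junction_zero (j : Fin (m + 1)) :
    ReflTransGen carc (junction j) (junction 0) :=
  Fin.induction .refl (fun i ih => (reflTransGen_carc_east_west i).trans ih) j

theorem reflTransGen_carc_from_junction_zero : ∀ x : CV m, ReflTransGen carc (junction 0) x
  | junction j => reflTransGen_carc_junction_zero_junction j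
  | north i => (reflTransGen_carc_junction_zero_junction _).tail (carc_west_north i)
  | south i =>
    ((reflTransGen_carc_junction_zero_junction _).tail (carc_west_north i)).tail
      (carc_north_south i)

theorem reflTransGen_carc_to_junction_zero : ∀ x : CV m, ReflTransGen carc x (junction 0)
  | junction j => reflTransGen_carc_junction_junction_zero j
  | north i =>
    .head (carc_north_south i) <| .head (carc_south_west i) <|
      reflTransGen_carc_junction_junction_zero _
  | south i => .head (carc_south_west i) (reflTransGen_carc_junction_junction_zero _)

theorem reflTransGen_carc (x y : CV m) : ReflTransGen carc x y :=
  (reflTransGen_carc_to_junction_zero x).trans (reflTransGen_carc_from_junction_zero y)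

def WestOf (d : Fin m) : CV m → Prop
  | junction j => j.val ≤ d.val
  | north i => i.val ≤ d.val
  | south i => i.val < d.val

theorem WestOf.of_carcDel {d : Fin m} {a b : CV m} (hab : carcDel d a b) (ha : WestOf d a) :
    WestOf d b := by
  obtain ⟨hab, hd⟩ := hab
  cases a <;> cases b <;> simp_all [carc, WestOf, Fin.ext_iff] <;> omega

theorem WestOf.of_reflTransGen_carcDel {d : Fin m} {a b : CV m}
    (hab : ReflTransGen (carcDel d) a b) (ha : WestOf d a) : WestOf d b := by
  induction hab with
  | refl => exact ha
  | tail _ hbc ih => exact ih.of_carcDel hbc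

theorem not_reflTransGen_carcDel_west_east (d : Fin m) :
    ¬ ReflTransGen (carcDel d) (junction d.castSucc) (junction d.succ) := fun h => by
  have := WestOf.of_reflTransGen_carcDel h (by simp [WestOf])
  simp [WestOf] at this

end CV

theorem joined_diamonds_strongly_connected_general {m : ℕ} :
    (∀ x y : CV m, Relation.ReflTransGen carc x y) ∧
    ∀ d : Fin m,
      (¬ ∀ x y : CV m, Relation.ReflTransGen (carcDel d) x y) ∧
      ¬ (Relation.ReflTransGen (carcDel d) (CV.junction d.castSucc) (CV.junction d.succ) ∧
         Relation.ReflTransGen (carcDel d) (CV.junction d.succ) (CV.junction d.castSucc)) :=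
  ⟨CV.reflTransGen_carc, fun d =>
    ⟨fun h => CV.not_reflTransGen_carcDel_west_east d (h _ _),
      fun h => CV.not_reflTransGen_carcDel_west_east d h.1⟩⟩

/-- A sequence of `m ≥ 1` joined diamonds is strongly connected, but picking any
diamond destroys strong connectivity; in particular the junction vertices on the
two sides of the picked diamond are no longer strongly connected. -/
theorem joined_diamonds_strongly_connected {m : ℕ} (hm : 1 ≤ m) :
    (∀ x y : CV m, Relation.ReflTransGen carc x y) ∧
    ∀ d : Fin m,
      (¬ ∀ x y : CV m, Relation.ReflTransGen (carcDel d) x y) ∧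
      ¬ (Relation.ReflTransGen (carcDel d) (CV.junction d.castSucc) (CV.junction d.succ) ∧
         Relation.ReflTransGen (carcDel d) (CV.junction d.succ) (CV.junction d.castSucc)) :=
  joined_diamonds_strongly_connected_general
end
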